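/- arXiv:2203.05019 — 2 statements merged into one kernel-verified Lean document; each statement's English description precedes it below -/
import Mathlib

section
/- Let b_1, …, b_n be linearly independent vectors in ℝ^n forming the columns of a matrix B, let T ∈ ℝ^{n×n} be upper-triangular and invertible, and let S = B·T with columns s_1, …, s_n. Then for every i, the Gram–Schmidt vectors satisfy s_i^* = T_{ii} · b_i^*. -/
open scoped RealInnerProductSpace

/-- The Gram–Schmidt orthogonalization of a finite family of vectors in `ℝ^n`. -/
noncomputable def gramSchmidtVecs {n m : ℕ} (b : Fin m → EuclideanSpace ℝ (Fin n)) :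
    Fin m → EuclideanSpace ℝ (Fin n) :=
  @InnerProductSpace.gramSchmidt ℝ (EuclideanSpace ℝ (Fin n)) _ _ _ (Fin m) _ _
    (inferInstance : WellFoundedLT (Fin m)) b

/-!
`bᵢ*` is characterised as the vector with `bᵢ - bᵢ* ∈ W` and `bᵢ* ⊥ W`, where `W` is the span of
`b₁, …, bᵢ₋₁`. Since `T` and `T⁻¹` are both upper-triangular, `s₁, …, sᵢ₋₁` span the same `W`,
and `sᵢ ≡ Tᵢᵢ bᵢ` modulo `W`; so `sᵢ* - Tᵢᵢ bᵢ*` lies in `W ⊓ Wᗮ = 0`.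
-/

open Submodule

namespace InnerProductSpace

variable {𝕜 E ι : Type*} [RCLike 𝕜] [NormedAddCommGroup E] [InnerProductSpace 𝕜 E]
  [LinearOrder ι] [LocallyFiniteOrderBot ι] [WellFoundedLT ι]

theorem sub_gramSchmidt_mem_span_Iio (f : ι → E) (i : ι) :
    f i - gramSchmidt 𝕜 f i ∈ span 𝕜 (f '' Set.Iio i) := by
  rw [gramSchmidt_def, sub_sub_cancel, ← span_gramSchmidt_Iio 𝕜 f i]
  refine sum_mem fun j hj => span_mono ?_ (starProjection_apply_mem _ _)
  exact Set.singleton_subset_iff.2 ⟨j, Finset.mem_Iio.1 hj, rfl⟩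

theorem gramSchmidt_mem_orthogonal_span_Iio (f : ι → E) (i : ι) :
    gramSchmidt 𝕜 f i ∈ (span 𝕜 (f '' Set.Iio i))ᗮ := by
  rw [← span_gramSchmidt_Iio 𝕜 f i]
  refine (isOrtho_span.2 ?_).ge (mem_span_singleton_self _)
  rintro _ ⟨j, hj, rfl⟩ _ rfl
  exact gramSchmidt_orthogonal 𝕜 f hj.ne

theorem gramSchmidt_eq_smul_of_sub_smul_mem_span {f g : ι → E} {i : ι} {c : 𝕜}
    (hspan : span 𝕜 (g '' Set.Iio i) = span 𝕜 (f '' Set.Iio i))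
    (hg : g i - c • f i ∈ span 𝕜 (f '' Set.Iio i)) :
    gramSchmidt 𝕜 g i = c • gramSchmidt 𝕜 f i := by
  set W := span 𝕜 (f '' Set.Iio i)
  have hW : gramSchmidt 𝕜 g i - c • gramSchmidt 𝕜 f i ∈ W := by
    have hg' := sub_gramSchmidt_mem_span_Iio (𝕜 := 𝕜) g i
    rw [hspan] at hg'
    have hf' := sub_gramSchmidt_mem_span_Iio (𝕜 := 𝕜) f i
    convert W.add_mem (W.sub_mem hg hg') (W.smul_mem c hf') using 1
    rw [smul_sub]
    abel
  have hWperp : gramSchmidt 𝕜 g i - c • gramSchmidt 𝕜 f i ∈ Wᗮ := by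
    have hg' := gramSchmidt_mem_orthogonal_span_Iio (𝕜 := 𝕜) g i
    rw [hspan] at hg'
    exact Wᗮ.sub_mem hg' (Wᗮ.smul_mem c (gramSchmidt_mem_orthogonal_span_Iio f i))
  have h0 : gramSchmidt 𝕜 g i - c • gramSchmidt 𝕜 f i ∈ W ⊓ Wᗮ := ⟨hW, hWperp⟩
  rwa [W.inf_orthogonal_eq_bot, mem_bot, sub_eq_zero] at h0

end InnerProductSpace

namespace Matrix

variable {R M ι : Type*} [CommRing R] [AddCommGroup M] [Module R M] [Fintype ι]

theorem sum_smul_sum_smul (A B : Matrix ι ι R) (b : ι → M) (i : ι) :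
    ∑ j, A j i • ∑ k, B k j • b k = ∑ k, (B * A) k i • b k := by
  simp only [Finset.smul_sum, smul_smul, mul_apply, Finset.sum_smul]
  rw [Finset.sum_comm]
  simp only [mul_comm]

variable [LinearOrder ι] {T : Matrix ι ι R}

theorem IsUpperTriangular.sum_smul_sub_diag_mem_span (hT : T.IsUpperTriangular) (b : ι → M)
    (i : ι) : ∑ j, T j i • b j - T i i • b i ∈ span R (b '' Set.Iio i) := by
  rw [← Finset.sum_erase_eq_sub (Finset.mem_univ i)]
  refine sum_mem fun j hj => ?_
  rcases lt_or_gt_of_ne (Finset.ne_of_mem_erase hj) with hji | hij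
  · exact smul_mem _ _ (subset_span ⟨j, hji, rfl⟩)
  · rw [hT hij, zero_smul]
    exact zero_mem _

theorem IsUpperTriangular.span_image_Iio_le (hT : T.IsUpperTriangular) {b s : ι → M}
    (hs : ∀ i, s i = ∑ j, T j i • b j) (i : ι) :
    span R (s '' Set.Iio i) ≤ span R (b '' Set.Iio i) := by
  refine span_le.2 ?_
  rintro _ ⟨j, hj, rfl⟩
  rw [← sub_add_cancel (s j) (T j j • b j), hs j]
  refine add_mem (span_mono (Set.image_mono (Set.Iio_subset_Iio hj.le)) ?_)
    (smul_mem _ _ (subset_span ⟨j, hj, rfl⟩))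
  exact hT.sum_smul_sub_diag_mem_span b j

end Matrix

theorem gramSchmidt_of_upper_triangular_general (n : ℕ)
    (b : Fin n → EuclideanSpace ℝ (Fin n))
    (T : Matrix (Fin n) (Fin n) ℝ)
    (hT : ∀ i j : Fin n, j < i → T i j = 0) (hTinv : IsUnit T.det)
    (s : Fin n → EuclideanSpace ℝ (Fin n))
    (hs : ∀ i : Fin n, s i = ∑ j : Fin n, T j i • b j) :
    ∀ i : Fin n, gramSchmidtVecs s i = T i i • gramSchmidtVecs b i := by
  have hT' : T.IsUpperTriangular := fun i j h => hT i j h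
  have : Invertible T := T.invertibleOfIsUnitDet hTinv
  have hb : ∀ i, b i = ∑ j, T⁻¹ j i • s j := by
    simp [hs, Matrix.sum_smul_sum_smul, Matrix.mul_nonsing_inv _ hTinv, Matrix.one_apply]
  intro i
  have hT_inv : T⁻¹.IsUpperTriangular := Matrix.blockTriangular_inv_of_blockTriangular hT'
  refine InnerProductSpace.gramSchmidt_eq_smul_of_sub_smul_mem_span
    (le_antisymm (hT'.span_image_Iio_le hs i) (hT_inv.span_image_Iio_le hb i)) ?_
  simpa only [← hs] using hT'.sum_smul_sub_diag_mem_span b i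

/-- If `S = B * T` with `T` upper-triangular and invertible, and the columns of `B`
are linearly independent, then the Gram–Schmidt vectors satisfy `sᵢ* = Tᵢᵢ • bᵢ*`. -/
theorem gramSchmidt_of_upper_triangular (n : ℕ)
    (b : Fin n → EuclideanSpace ℝ (Fin n)) (hb : LinearIndependent ℝ b)
    (T : Matrix (Fin n) (Fin n) ℝ)
    (hT : ∀ i j : Fin n, j < i → T i j = 0) (hTinv : IsUnit T.det)
    (s : Fin n → EuclideanSpace ℝ (Fin n))
    (hs : ∀ i : Fin n, s i = ∑ j : Fin n, T j i • b j) :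
    ∀ i : Fin n, gramSchmidtVecs s i = T i i • gramSchmidtVecs b i :=
  gramSchmidt_of_upper_triangular_general n b T hT hTinv s hs
end

section
/- Let b_1, …, b_n be linearly independent vectors in ℝ^n, let δ ∈ (1/4, 1), and suppose ‖b_{i+1}^* + μ_{i+1,i}·b_i^*‖² < δ·‖b_i^*‖² for some index i, where μ_{i+1,i} = ⟨b_{i+1}, b_i^*⟩/⟨b_i^*, b_i^*⟩. Let b'_1, …, b'_n be obtained by swapping b_i and b_{i+1}. Then φ(B') < √δ · φ(B), where φ(B) = ∏_{i=1}^n ∏_{j=1}^i ‖b_j^*‖ is the potential of the basis. -/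
/-- The potential of a basis: `φ(B) = ∏_{i=1}^n ∏_{j=1}^i ‖bⱼ*‖`. -/
noncomputable def basisPotential {n : ℕ} (b : Fin n → EuclideanSpace ℝ (Fin n)) : ℝ :=
  ∏ i : Fin n, ∏ j ∈ Finset.Iic i, ‖gramSchmidtVecs b j‖

/-!
Swapping the adjacent vectors `bᵢ, bᵢ₊₁` leaves the span of every initial segment other than
`b₁, …, bᵢ` unchanged, so `b'ₖ* = bₖ*` for `k ∉ {i, i+1}`, while `b'ᵢ* = bᵢ₊₁* + μ bᵢ*`.
Applying this formula once more to swap back shows that `‖b'ᵢ*‖ ‖b'ᵢ₊₁*‖ = ‖bᵢ*‖ ‖bᵢ₊₁*‖`,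
so the only factor of the potential that changes is `det L_i`, which gets multiplied by
`‖b'ᵢ*‖ / ‖bᵢ*‖ < √δ`.
-/

open Finset Submodule InnerProductSpace

theorem Fin.covBy_mk_add_one {n : ℕ} (i : Fin n) (hi : (i : ℕ) + 1 < n) : i ⋖ ⟨i + 1, hi⟩ :=
  ⟨Nat.lt_add_one _, fun k hik hkj => by simp only [Fin.lt_def] at hik hkj; omega⟩

section CovBy

variable {ι : Type*} [LinearOrder ι]

theorem CovBy.lt_iff_lt_of_ne {i j k : ι} (hij : i ⋖ j) (hkj : k ≠ j) : i < k ↔ j < k :=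
  ⟨fun hik => (hij.ge_of_gt hik).lt_of_ne' hkj, hij.1.trans⟩

theorem CovBy.image_swap_Iio_of_ne {i j k : ι} (hij : i ⋖ j) (hkj : k ≠ j) :
    Equiv.swap i j '' Set.Iio k = Set.Iio k := by
  ext x
  rw [Equiv.image_eq_preimage_symm, Equiv.symm_swap, Set.mem_preimage, Set.mem_Iio,
    Set.mem_Iio, Equiv.swap_apply_def]
  split_ifs with hxi hxj
  · rw [hxi, hij.lt_iff_lt_of_ne hkj]
  · rw [hxj, hij.lt_iff_lt_of_ne hkj]
  · rfl

variable [LocallyFiniteOrderBot ι]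

theorem CovBy.finsetIio_eq_insert {i j : ι} (hij : i ⋖ j) : Iio j = insert i (Iio i) := by
  rw [Iio_insert, ← coe_inj, coe_Iio, coe_Iic, hij.Iio_eq]

variable {M : Type*} [CommMonoid M]

theorem CovBy.prod_Iic_eq_of_ne {g g' : ι → M} {i j : ι} (hij : i ⋖ j)
    (hg : ∀ l, l ≠ i → l ≠ j → g' l = g l) (hpair : g' i * g' j = g i * g j) {k : ι}
    (hki : k ≠ i) : ∏ l ∈ Iic k, g' l = ∏ l ∈ Iic k, g l := by
  rcases hki.lt_or_gt with hki | hik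
  · refine prod_congr rfl fun l hl => hg l ?_ ?_
    · exact ((mem_Iic.1 hl).trans_lt hki).ne
    · exact ((mem_Iic.1 hl).trans_lt (hki.trans hij.1)).ne
  · have hpair_sub : {i, j} ⊆ Iic k := by
      simp [insert_subset_iff, hik.le, hij.ge_of_gt hik]
    rw [← prod_sdiff hpair_sub, ← prod_sdiff hpair_sub, prod_pair hij.1.ne, prod_pair hij.1.ne,
      hpair]
    congr 1
    refine prod_congr rfl fun l hl => ?_
    simp only [mem_sdiff, mem_insert, mem_singleton, not_or] at hl
    exact hg l hl.2.1 hl.2.2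

theorem CovBy.mul_prod_prod_Iic_eq [Fintype ι] {g g' : ι → M} {i j : ι} (hij : i ⋖ j)
    (hg : ∀ l, l ≠ i → l ≠ j → g' l = g l) (hpair : g' i * g' j = g i * g j) :
    g i * ∏ k, ∏ l ∈ Iic k, g' l = g' i * ∏ k, ∏ l ∈ Iic k, g l := by
  have hIio : ∏ l ∈ Iio i, g' l = ∏ l ∈ Iio i, g l :=
    prod_congr rfl fun l hl => hg l (mem_Iio.1 hl).ne ((mem_Iio.1 hl).trans hij.1).ne
  rw [← mul_prod_erase univ _ (mem_univ i), ← mul_prod_erase univ _ (mem_univ i),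
    ← Iio_insert, prod_insert notMem_Iio_self, prod_insert notMem_Iio_self, hIio,
    prod_congr rfl fun k hk => hij.prod_Iic_eq_of_ne hg hpair (ne_of_mem_erase hk)]
  ac_rfl

end CovBy

section GramSchmidt

variable {𝕜 E ι : Type*} [RCLike 𝕜] [NormedAddCommGroup E] [InnerProductSpace 𝕜 E]

local notation "⟪" x ", " y "⟫" => inner 𝕜 x y

theorem mem_orthogonal_span_of_forall_inner {s : Set E} {w : E} (h : ∀ x ∈ s, ⟪x, w⟫ = 0) :
    w ∈ (span 𝕜 s)ᗮ :=
  (isOrtho_span.2 fun x hx _ hy => (Set.mem_singleton_iff.1 hy) ▸ h x hx).symm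
    (mem_span_singleton_self w)

variable [LinearOrder ι]

theorem CovBy.span_comp_swap_image_Iio {f : ι → E} {i j k : ι} (hij : i ⋖ j) (hkj : k ≠ j) :
    span 𝕜 ((f ∘ Equiv.swap i j) '' Set.Iio k) = span 𝕜 (f '' Set.Iio k) := by
  rw [Set.image_comp, hij.image_swap_Iio_of_ne hkj]

variable [LocallyFiniteOrderBot ι] [WellFoundedLT ι]

theorem sum_starProjection_gramSchmidt_mem_span (f : ι → E) (k : ι) (x : E) :
    ∑ l ∈ Iio k, (𝕜 ∙ gramSchmidt 𝕜 f l).starProjection x ∈ span 𝕜 (f '' Set.Iio k) := by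
  rw [← span_gramSchmidt_Iio]
  refine sum_mem fun l hl => ?_
  rw [starProjection_singleton]
  exact smul_mem _ _ (subset_span ⟨l, by simpa using hl, rfl⟩)

theorem sub_gramSchmidt_mem_span (f : ι → E) (k : ι) :
    f k - gramSchmidt 𝕜 f k ∈ span 𝕜 (f '' Set.Iio k) := by
  rw [sub_eq_iff_eq_add'.2 (gramSchmidt_def' 𝕜 f k)]
  exact sum_starProjection_gramSchmidt_mem_span f k (f k)

theorem gramSchmidt_mem_orthogonal_span (f : ι → E) (k : ι) :
    gramSchmidt 𝕜 f k ∈ (span 𝕜 (f '' Set.Iio k))ᗮ :=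
  mem_orthogonal_span_of_forall_inner <| by
    rintro _ ⟨l, hl, rfl⟩
    exact inner_eq_zero_symm.1 (gramSchmidt_inv_triangular 𝕜 f hl)

theorem gramSchmidt_eq_of_sub_mem_span {f : ι → E} {k : ι} {w : E}
    (hsub : f k - w ∈ span 𝕜 (f '' Set.Iio k)) (horth : w ∈ (span 𝕜 (f '' Set.Iio k))ᗮ) :
    gramSchmidt 𝕜 f k = w := by
  set V := span 𝕜 (f '' Set.Iio k)
  have hmem : gramSchmidt 𝕜 f k - w ∈ V := by
    simpa using V.sub_mem hsub (sub_gramSchmidt_mem_span f k)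
  have hmem' : gramSchmidt 𝕜 f k - w ∈ Vᗮ :=
    Vᗮ.sub_mem (gramSchmidt_mem_orthogonal_span f k) horth
  exact sub_eq_zero.1 <| Submodule.disjoint_def.1 V.orthogonal_disjoint _ hmem hmem'

theorem gramSchmidt_comp_swap_of_ne (f : ι → E) {i j k : ι} (hij : i ⋖ j) (hki : k ≠ i)
    (hkj : k ≠ j) : gramSchmidt 𝕜 (f ∘ Equiv.swap i j) k = gramSchmidt 𝕜 f k := by
  apply gramSchmidt_eq_of_sub_mem_span
  · rw [hij.span_comp_swap_image_Iio hkj, Function.comp_apply,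
      Equiv.swap_apply_of_ne_of_ne hki hkj]
    exact sub_gramSchmidt_mem_span f k
  · rw [hij.span_comp_swap_image_Iio hkj]
    exact gramSchmidt_mem_orthogonal_span f k

theorem gramSchmidt_comp_swap_left (f : ι → E) {i j : ι} (hij : i ⋖ j) :
    gramSchmidt 𝕜 (f ∘ Equiv.swap i j) i = gramSchmidt 𝕜 f j +
      (⟪gramSchmidt 𝕜 f i, f j⟫ / ⟪gramSchmidt 𝕜 f i, gramSchmidt 𝕜 f i⟫) • gramSchmidt 𝕜 f i := by
  apply gramSchmidt_eq_of_sub_mem_span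
  · rw [hij.span_comp_swap_image_Iio hij.1.ne, Function.comp_apply, Equiv.swap_apply_left]
    have hsplit := gramSchmidt_def' 𝕜 f j
    rw [hij.finsetIio_eq_insert, sum_insert notMem_Iio_self, starProjection_singleton,
      RCLike.ofReal_pow, ← inner_self_eq_norm_sq_to_K] at hsplit
    convert sum_starProjection_gramSchmidt_mem_span f i (f j) using 1
    nth_rewrite 1 [hsplit]
    abel
  · rw [hij.span_comp_swap_image_Iio hij.1.ne]
    refine add_mem ?_ (smul_mem _ _ (gramSchmidt_mem_orthogonal_span f i))
    exact orthogonal_le (span_mono (Set.image_mono (Set.Iio_subset_Iio hij.1.le)))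
      (gramSchmidt_mem_orthogonal_span f j)

end GramSchmidt

theorem norm_mul_norm_eq_of_add_smul {E : Type*} [NormedAddCommGroup E] [InnerProductSpace ℝ E]
    {u v w z : E} {a b : ℝ} (huw : inner ℝ u w = 0) (hvz : inner ℝ v z = 0)
    (hv : v = w + a • u) (hu : u = z + b • v) : ‖v‖ * ‖z‖ = ‖u‖ * ‖w‖ := by
  have hv2 : ‖v‖ ^ 2 = ‖w‖ ^ 2 + a ^ 2 * ‖u‖ ^ 2 := by
    rw [hv, norm_add_sq_real, real_inner_smul_right, real_inner_comm, huw, norm_smul,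
      mul_pow, Real.norm_eq_abs, sq_abs]
    ring
  have hu2 : ‖u‖ ^ 2 = ‖z‖ ^ 2 + b ^ 2 * ‖v‖ ^ 2 := by
    rw [hu, norm_add_sq_real, real_inner_smul_right, real_inner_comm, hvz, norm_smul,
      mul_pow, Real.norm_eq_abs, sq_abs]
    ring
  have huv : a * ‖u‖ ^ 2 = b * ‖v‖ ^ 2 :=
    calc a * ‖u‖ ^ 2 = inner ℝ u v := by
          rw [hv, inner_add_right, huw, real_inner_smul_right, real_inner_self_eq_norm_sq]; ring
      _ = b * ‖v‖ ^ 2 := by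
          rw [hu, inner_add_left, real_inner_comm, hvz, real_inner_smul_left,
            real_inner_self_eq_norm_sq]; ring
  refine (pow_left_inj₀ (by positivity) (by positivity) two_ne_zero).1 ?_
  rw [mul_pow, mul_pow]
  linear_combination (-(‖v‖ ^ 2)) * hu2 + ‖u‖ ^ 2 * hv2 + (a * ‖u‖ ^ 2 + b * ‖v‖ ^ 2) * huv

theorem lt_sqrt_mul_of_sq_lt_mul_sq {x y δ : ℝ} (hx : 0 ≤ x) (hy : 0 ≤ y)
    (h : x ^ 2 < δ * y ^ 2) : x < √δ * y := by
  rw [← Real.sqrt_sq hy, ← Real.sqrt_mul' _ (sq_nonneg y)]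
  exact (Real.lt_sqrt hx).2 h

theorem gramSchmidtVecs_eq {n m : ℕ} (b : Fin m → EuclideanSpace ℝ (Fin n)) :
    gramSchmidtVecs b = gramSchmidt ℝ b := rfl

theorem basisPotential_pos {n : ℕ} {b : Fin n → EuclideanSpace ℝ (Fin n)}
    (hb : LinearIndependent ℝ b) : 0 < basisPotential b :=
  prod_pos fun _ _ => prod_pos fun l _ => norm_pos_iff.2 (gramSchmidt_ne_zero l hb)

theorem potential_decrease_of_swap_general (n : ℕ)
    (b : Fin n → EuclideanSpace ℝ (Fin n)) (hb : LinearIndependent ℝ b)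
    (δ : ℝ)
    (i : Fin n) (hi : (i : ℕ) + 1 < n)
    (hlovasz : ‖gramSchmidtVecs b ⟨(i : ℕ) + 1, hi⟩ +
        ((inner ℝ (b ⟨(i : ℕ) + 1, hi⟩) (gramSchmidtVecs b i) : ℝ) /
          (inner ℝ (gramSchmidtVecs b i) (gramSchmidtVecs b i) : ℝ)) • gramSchmidtVecs b i‖ ^ 2
        < δ * ‖gramSchmidtVecs b i‖ ^ 2)
    (b' : Fin n → EuclideanSpace ℝ (Fin n))
    (hb' : b' = b ∘ Equiv.swap i ⟨(i : ℕ) + 1, hi⟩) :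
    basisPotential b' < Real.sqrt δ * basisPotential b := by
  set j : Fin n := ⟨i + 1, hi⟩
  have hij : i ⋖ j := Fin.covBy_mk_add_one i hi
  subst hb'
  rw [gramSchmidtVecs_eq, real_inner_comm _ (b j)] at hlovasz
  have hv := gramSchmidt_comp_swap_left (𝕜 := ℝ) b hij
  have hu := gramSchmidt_comp_swap_left (𝕜 := ℝ) (b ∘ Equiv.swap i j) hij
  rw [show (b ∘ Equiv.swap i j) ∘ Equiv.swap i j = b from
    funext fun k => congrArg b (Equiv.swap_apply_self i j k)] at hu
  have hpot : ‖gramSchmidt ℝ b i‖ * basisPotential (b ∘ Equiv.swap i j) =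
      ‖gramSchmidt ℝ (b ∘ Equiv.swap i j) i‖ * basisPotential b :=
    hij.mul_prod_prod_Iic_eq
      (fun l hli hlj => congrArg norm (gramSchmidt_comp_swap_of_ne b hij hli hlj))
      (norm_mul_norm_eq_of_add_smul (gramSchmidt_orthogonal ℝ b hij.1.ne)
        (gramSchmidt_orthogonal ℝ _ hij.1.ne) hv hu)
  have hv_lt : ‖gramSchmidt ℝ (b ∘ Equiv.swap i j) i‖ < √δ * ‖gramSchmidt ℝ b i‖ := by
    rw [hv]
    exact lt_sqrt_mul_of_sq_lt_mul_sq (norm_nonneg _) (norm_nonneg _) hlovasz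
  have hu_pos : 0 < ‖gramSchmidt ℝ b i‖ := norm_pos_iff.2 (gramSchmidt_ne_zero i hb)
  refine lt_of_mul_lt_mul_left ?_ hu_pos.le
  calc _ = _ := hpot
    _ < √δ * ‖gramSchmidt ℝ b i‖ * basisPotential b :=
        mul_lt_mul_of_pos_right hv_lt (basisPotential_pos hb)
    _ = _ := by ring

/-- If the Lovász condition fails at index `i` (with parameter `δ ∈ (1/4, 1)`), then
swapping `bᵢ` and `bᵢ₊₁` decreases the potential of the basis by a factor
of more than `√δ`. -/
theorem potential_decrease_of_swap (n : ℕ)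
    (b : Fin n → EuclideanSpace ℝ (Fin n)) (hb : LinearIndependent ℝ b)
    (δ : ℝ) (hδ : 1 / 4 < δ ∧ δ < 1)
    (i : Fin n) (hi : (i : ℕ) + 1 < n)
    (hlovasz : ‖gramSchmidtVecs b ⟨(i : ℕ) + 1, hi⟩ +
        ((inner ℝ (b ⟨(i : ℕ) + 1, hi⟩) (gramSchmidtVecs b i) : ℝ) /
          (inner ℝ (gramSchmidtVecs b i) (gramSchmidtVecs b i) : ℝ)) • gramSchmidtVecs b i‖ ^ 2
        < δ * ‖gramSchmidtVecs b i‖ ^ 2)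
    (b' : Fin n → EuclideanSpace ℝ (Fin n))
    (hb' : b' = b ∘ Equiv.swap i ⟨(i : ℕ) + 1, hi⟩) :
    basisPotential b' < Real.sqrt δ * basisPotential b :=
  potential_decrease_of_swap_general n b hb δ i hi hlovasz b' hb'
end
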